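/- arXiv:1609.08495 — 5 statements merged into one kernel-verified Lean document; each statement's English description precedes it below -/
import Mathlib

section
/- Let α: ℝ → ℝ³ be a smooth curve with ‖α'(s)‖ = 1 for all s, let c ∈ ℝ, and define the involute β(s) = α(s) + (c − s) • α'(s) and the unit vector field N(s) = (β(s) − α(s)) / ‖β(s) − α(s)‖ along β. Then for every s with s < c one has N(s) = α'(s) and N'(s) = (1/(c − s)) • β'(s); in particular N'(s) is a scalar multiple of β'(s), so N is a rotation minimizing vector field along β. -/
open scoped InnerProductSpace

/-- If `β(s) = α(s) + (c − s) • α'(s)` is an involute of a unit-speed curve `α` in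
Euclidean 3-space, then the unit vector field `N(s) = (β(s) − α(s))/‖β(s) − α(s)‖`
along `β` satisfies `N(s) = α'(s)` and `N'(s) = (1/(c − s)) • β'(s)` for `s < c`;
in particular `N'(s)` is proportional to `β'(s)`, so `N` is rotation minimizing
along `β`. -/
theorem involute_gives_rm_field
    (α : ℝ → EuclideanSpace ℝ (Fin 3)) (c : ℝ)
    (hα : ContDiff ℝ (⊤ : ℕ∞) α)
    (hunit : ∀ s, ‖deriv α s‖ = 1)
    (β : ℝ → EuclideanSpace ℝ (Fin 3))
    (hβ : ∀ s, β s = α s + (c - s) • deriv α s)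
    (N : ℝ → EuclideanSpace ℝ (Fin 3))
    (hNdef : ∀ s, N s = ‖β s - α s‖⁻¹ • (β s - α s)) :
    ∀ s, s < c →
      N s = deriv α s ∧
      deriv N s = (1 / (c - s)) • deriv β s ∧
      ∃ a : ℝ, deriv N s = a • deriv β s := by
  have hd1 : Differentiable ℝ α := hα.differentiable (by simp)
  have hd2 : Differentiable ℝ (deriv α) :=
    ((contDiff_infty_iff_deriv.mp (hα.of_le (by simp))).2).differentiable (by simp)
  have hN : ∀ t, t < c → N t = deriv α t := by
    intro t ht
    have hne : c - t ≠ 0 := sub_ne_zero.mpr (ne_of_gt ht)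
    have h1 : β t - α t = (c - t) • deriv α t := by rw [hβ t]; abel
    rw [hNdef t, h1, norm_smul, hunit, Real.norm_eq_abs,
      abs_of_pos (sub_pos.mpr ht), mul_one, inv_smul_smul₀ hne]
  intro s hs
  have hne : c - s ≠ 0 := sub_ne_zero.mpr (ne_of_gt hs)
  have heq : N =ᶠ[nhds s] deriv α :=
    Filter.eventuallyEq_of_mem (Iio_mem_nhds hs) fun t ht => hN t ht
  have hNd : deriv N s = deriv (deriv α) s := heq.deriv_eq
  -- derivative of β
  have hβfun : β = fun t => α t + (c - t) • deriv α t := funext hβ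
  have hsm : HasDerivAt (fun t : ℝ => (c - t)) (-1 : ℝ) s := by
    simpa using ((hasDerivAt_id s).const_sub c)
  have hβd : HasDerivAt β (deriv α s +
      ((c - s) • deriv (deriv α) s + (-1 : ℝ) • deriv α s)) s := by
    rw [hβfun]
    exact (hd1 s).hasDerivAt.add (hsm.smul (hd2 s).hasDerivAt)
  have hβds : deriv β s = (c - s) • deriv (deriv α) s := by
    rw [hβd.deriv]
    simp [neg_one_smul]
  refine ⟨hN s hs, ?_, ?_⟩
  · rw [hNd, hβds, one_div, smul_smul, inv_mul_cancel₀ hne, one_smul]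
  · exact ⟨1 / (c - s), by
      rw [hNd, hβds, one_div, smul_smul, inv_mul_cancel₀ hne, one_smul]⟩
end

section
/- Let γ: ℝ → ℝ³ be a smooth unit-speed curve equipped with a rotation minimizing frame: smooth maps N₁, N₂: ℝ → ℝ³ such that (γ'(s), N₁(s), N₂(s)) is orthonormal for all s, and smooth functions κ₁, κ₂: ℝ → ℝ with N₁'(s) = −κ₁(s) • γ'(s) and N₂'(s) = −κ₂(s) • γ'(s) for all s. Then γ is spherical, i.e. there exist p ∈ ℝ³ and r > 0 with ‖γ(s) − p‖ = r for all s, if and only if there exist constants a, b ∈ ℝ with a·κ₁(s) + b·κ₂(s) = 1 for all s (the normal development lies on a line not passing through the origin); moreover in that case the constants can be chosen so that a² + b² = r². -/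
open scoped InnerProductSpace

private lemma orth_three (T N₁ N₂ v : EuclideanSpace ℝ (Fin 3))
    (hT : ‖T‖ = 1) (h1 : ‖N₁‖ = 1) (h2 : ‖N₂‖ = 1)
    (o1 : ⟪T, N₁⟫_ℝ = 0) (o2 : ⟪T, N₂⟫_ℝ = 0) (o3 : ⟪N₁, N₂⟫_ℝ = 0)
    (hv1 : ⟪v, T⟫_ℝ = 0) (hv2 : ⟪v, N₁⟫_ℝ = 0) (hv3 : ⟪v, N₂⟫_ℝ = 0) : v = 0 := by
  by_contra hv
  have hvn : ‖v‖ ≠ 0 := fun h => hv (norm_eq_zero.mp h)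
  set w : EuclideanSpace ℝ (Fin 3) := ‖v‖⁻¹ • v with hw
  have hTT : ⟪T, T⟫_ℝ = 1 := by rw [real_inner_self_eq_norm_sq, hT]; norm_num
  have h11 : ⟪N₁, N₁⟫_ℝ = 1 := by rw [real_inner_self_eq_norm_sq, h1]; norm_num
  have h22 : ⟪N₂, N₂⟫_ℝ = 1 := by rw [real_inner_self_eq_norm_sq, h2]; norm_num
  have hvv : ⟪v, v⟫_ℝ = ‖v‖ ^ 2 := real_inner_self_eq_norm_sq v
  have horth : Orthonormal ℝ ![T, N₁, N₂, w] := by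
    rw [orthonormal_iff_ite]
    intro i j
    fin_cases i <;> fin_cases j <;>
      simp only [Fin.zero_eta, Fin.mk_one, Fin.reduceFinMk, Fin.isValue,
          Matrix.cons_val', Matrix.cons_val_zero, Matrix.cons_val_one,
          Matrix.head_cons, Matrix.cons_val_two, Matrix.tail_cons, Matrix.cons_val_three,
          Matrix.cons_val_fin_one, Matrix.head_fin_const, Fin.isValue, hw,
          real_inner_smul_left, real_inner_smul_right, hTT, h11, h22, hvv,
          o1, o2, o3, hv1, hv2, hv3, real_inner_comm v T, real_inner_comm v N₁,
          real_inner_comm v N₂, real_inner_comm N₁ T, real_inner_comm N₂ T,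
          real_inner_comm N₂ N₁, mul_zero, mul_one, zero_mul, Fin.reduceEq,
          reduceIte]
    all_goals first
      | (rw [real_inner_comm]; simp only [o1, o2, o3])
      | (field_simp; try ring)
  have := horth.linearIndependent.fintype_card_le_finrank
  simp [finrank_euclideanSpace_fin] at this

/-- **Bishop's characterization of spherical curves.** A unit-speed curve `γ` in
Euclidean 3-space equipped with a rotation minimizing frame `(γ', N₁, N₂)` with natural
curvatures `κ₁, κ₂` is spherical if and only if its normal development `s ↦ (κ₁ s, κ₂ s)`
lies on a line not passing through the origin, i.e. `a·κ₁ + b·κ₂ = 1` for some constants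
`a, b`; moreover for a sphere of radius `r` the constants can be chosen with
`a² + b² = r²`. -/
theorem spherical_iff_normal_development_line
    (γ N₁ N₂ : ℝ → EuclideanSpace ℝ (Fin 3)) (κ₁ κ₂ : ℝ → ℝ)
    (hγ : ContDiff ℝ (⊤ : ℕ∞) γ) (hN₁ : ContDiff ℝ (⊤ : ℕ∞) N₁) (hN₂ : ContDiff ℝ (⊤ : ℕ∞) N₂)
    (hκ₁ : ContDiff ℝ (⊤ : ℕ∞) κ₁) (hκ₂ : ContDiff ℝ (⊤ : ℕ∞) κ₂)
    (hunit : ∀ s, ‖deriv γ s‖ = 1)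
    (hN₁unit : ∀ s, ‖N₁ s‖ = 1) (hN₂unit : ∀ s, ‖N₂ s‖ = 1)
    (hTN₁ : ∀ s, ⟪deriv γ s, N₁ s⟫_ℝ = 0)
    (hTN₂ : ∀ s, ⟪deriv γ s, N₂ s⟫_ℝ = 0)
    (hN₁N₂ : ∀ s, ⟪N₁ s, N₂ s⟫_ℝ = 0)
    (hFrenet₁ : ∀ s, deriv N₁ s = -κ₁ s • deriv γ s)
    (hFrenet₂ : ∀ s, deriv N₂ s = -κ₂ s • deriv γ s) :
    ((∃ p : EuclideanSpace ℝ (Fin 3), ∃ r : ℝ, 0 < r ∧ ∀ s, ‖γ s - p‖ = r) ↔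
      (∃ a b : ℝ, ∀ s, a * κ₁ s + b * κ₂ s = 1)) ∧
    (∀ p : EuclideanSpace ℝ (Fin 3), ∀ r : ℝ, 0 < r → (∀ s, ‖γ s - p‖ = r) →
      ∃ a b : ℝ, (∀ s, a * κ₁ s + b * κ₂ s = 1) ∧ a ^ 2 + b ^ 2 = r ^ 2) := by
  have hγd : Differentiable ℝ γ := hγ.differentiable (by simp)
  have hT : ContDiff ℝ ((⊤ : ℕ∞) : WithTop ℕ∞) (deriv γ) :=
    (contDiff_infty_iff_deriv.mp (hγ.of_le (by simp))).2
  have hTd : Differentiable ℝ (deriv γ) := hT.differentiable (by simp)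
  have hN₁d : Differentiable ℝ N₁ := hN₁.differentiable (by simp)
  have hN₂d : Differentiable ℝ N₂ := hN₂.differentiable (by simp)
  have hTT : ∀ s, ⟪deriv γ s, deriv γ s⟫_ℝ = 1 := fun s => by
    rw [real_inner_self_eq_norm_sq, hunit]; norm_num
  have hN₁N₁ : ∀ s, ⟪N₁ s, N₁ s⟫_ℝ = 1 := fun s => by
    rw [real_inner_self_eq_norm_sq, hN₁unit]; norm_num
  have hN₂N₂ : ∀ s, ⟪N₂ s, N₂ s⟫_ℝ = 1 := fun s => by
    rw [real_inner_self_eq_norm_sq, hN₂unit]; norm_num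
  -- second derivative inner products
  have hsecN₁ : ∀ s, ⟪deriv (deriv γ) s, N₁ s⟫_ℝ = κ₁ s := by
    intro s
    have h1 : HasDerivAt (fun t => ⟪deriv γ t, N₁ t⟫_ℝ)
        (⟪deriv γ s, deriv N₁ s⟫_ℝ + ⟪deriv (deriv γ) s, N₁ s⟫_ℝ) s :=
      (hTd s).hasDerivAt.inner ℝ (hN₁d s).hasDerivAt
    have h2 : HasDerivAt (fun t => ⟪deriv γ t, N₁ t⟫_ℝ) 0 s := by
      have : (fun t => ⟪deriv γ t, N₁ t⟫_ℝ) = fun _ => (0 : ℝ) := funext hTN₁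
      rw [this]; exact hasDerivAt_const s 0
    have h3 := h1.unique h2
    rw [hFrenet₁, real_inner_smul_right, hTT] at h3
    linarith
  have hsecN₂ : ∀ s, ⟪deriv (deriv γ) s, N₂ s⟫_ℝ = κ₂ s := by
    intro s
    have h1 : HasDerivAt (fun t => ⟪deriv γ t, N₂ t⟫_ℝ)
        (⟪deriv γ s, deriv N₂ s⟫_ℝ + ⟪deriv (deriv γ) s, N₂ s⟫_ℝ) s :=
      (hTd s).hasDerivAt.inner ℝ (hN₂d s).hasDerivAt
    have h2 : HasDerivAt (fun t => ⟪deriv γ t, N₂ t⟫_ℝ) 0 s := by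
      have : (fun t => ⟪deriv γ t, N₂ t⟫_ℝ) = fun _ => (0 : ℝ) := funext hTN₂
      rw [this]; exact hasDerivAt_const s 0
    have h3 := h1.unique h2
    rw [hFrenet₂, real_inner_smul_right, hTT] at h3
    linarith
  -- forward direction with radius
  have key : ∀ p : EuclideanSpace ℝ (Fin 3), ∀ r : ℝ, 0 < r → (∀ s, ‖γ s - p‖ = r) →
      ∃ a b : ℝ, (∀ s, a * κ₁ s + b * κ₂ s = 1) ∧ a ^ 2 + b ^ 2 = r ^ 2 := by
    intro p r hr hsph
    set F : ℝ → EuclideanSpace ℝ (Fin 3) := fun s => γ s - p with hF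
    have hFd : ∀ s, HasDerivAt F (deriv γ s) s := fun s =>
      (hγd s).hasDerivAt.sub_const p
    -- ⟪F, T⟫ = 0
    have hFT : ∀ s, ⟪F s, deriv γ s⟫_ℝ = 0 := by
      intro s
      have h1 : HasDerivAt (fun t => ⟪F t, F t⟫_ℝ)
          (⟪F s, deriv γ s⟫_ℝ + ⟪deriv γ s, F s⟫_ℝ) s :=
        (hFd s).inner ℝ (hFd s)
      have h2 : HasDerivAt (fun t => ⟪F t, F t⟫_ℝ) 0 s := by
        have : (fun t => ⟪F t, F t⟫_ℝ) = fun _ => (r ^ 2 : ℝ) := by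
          funext t; rw [real_inner_self_eq_norm_sq, hF]; simp [hsph t]
        rw [this]; exact hasDerivAt_const s _
      have h3 := h1.unique h2
      rw [real_inner_comm (deriv γ s) (F s)] at h3
      rw [real_inner_comm]
      linarith
    -- f = ⟪F, N₁⟫ constant
    have hf : ∀ s, HasDerivAt (fun t => ⟪F t, N₁ t⟫_ℝ) 0 s := by
      intro s
      have h1 : HasDerivAt (fun t => ⟪F t, N₁ t⟫_ℝ)
          (⟪F s, deriv N₁ s⟫_ℝ + ⟪deriv γ s, N₁ s⟫_ℝ) s :=
        (hFd s).inner ℝ (hN₁d s).hasDerivAt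
      have : ⟪F s, deriv N₁ s⟫_ℝ + ⟪deriv γ s, N₁ s⟫_ℝ = 0 := by
        rw [hFrenet₁, real_inner_smul_right, hFT, hTN₁]; ring
      rwa [this] at h1
    have hg : ∀ s, HasDerivAt (fun t => ⟪F t, N₂ t⟫_ℝ) 0 s := by
      intro s
      have h1 : HasDerivAt (fun t => ⟪F t, N₂ t⟫_ℝ)
          (⟪F s, deriv N₂ s⟫_ℝ + ⟪deriv γ s, N₂ s⟫_ℝ) s :=
        (hFd s).inner ℝ (hN₂d s).hasDerivAt
      have : ⟪F s, deriv N₂ s⟫_ℝ + ⟪deriv γ s, N₂ s⟫_ℝ = 0 := by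
        rw [hFrenet₂, real_inner_smul_right, hFT, hTN₂]; ring
      rwa [this] at h1
    have hfc : ∀ s, ⟪F s, N₁ s⟫_ℝ = ⟪F 0, N₁ 0⟫_ℝ :=
      fun s => is_const_of_deriv_eq_zero
        (fun t => ((hf t).differentiableAt : DifferentiableAt ℝ _ t))
        (fun t => (hf t).deriv) s 0
    have hgc : ∀ s, ⟪F s, N₂ s⟫_ℝ = ⟪F 0, N₂ 0⟫_ℝ :=
      fun s => is_const_of_deriv_eq_zero
        (fun t => ((hg t).differentiableAt : DifferentiableAt ℝ _ t))
        (fun t => (hg t).deriv) s 0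
    set f0 : ℝ := ⟪F 0, N₁ 0⟫_ℝ
    set g0 : ℝ := ⟪F 0, N₂ 0⟫_ℝ
    -- ⟪F, γ''⟫ = -1
    have hFsec : ∀ s, ⟪F s, deriv (deriv γ) s⟫_ℝ = -1 := by
      intro s
      have h1 : HasDerivAt (fun t => ⟪F t, deriv γ t⟫_ℝ)
          (⟪F s, deriv (deriv γ) s⟫_ℝ + ⟪deriv γ s, deriv γ s⟫_ℝ) s :=
        (hFd s).inner ℝ (hTd s).hasDerivAt
      have h2 : HasDerivAt (fun t => ⟪F t, deriv γ t⟫_ℝ) 0 s := by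
        have : (fun t => ⟪F t, deriv γ t⟫_ℝ) = fun _ => (0 : ℝ) := funext hFT
        rw [this]; exact hasDerivAt_const s 0
      have h3 := h1.unique h2
      rw [hTT] at h3
      linarith
    -- F = f0 • N₁ + g0 • N₂
    have hFdecomp : ∀ s, F s = f0 • N₁ s + g0 • N₂ s := by
      intro s
      have hv : F s - (f0 • N₁ s + g0 • N₂ s) = 0 := by
        apply orth_three (deriv γ s) (N₁ s) (N₂ s) _
          (hunit s) (hN₁unit s) (hN₂unit s) (hTN₁ s) (hTN₂ s) (hN₁N₂ s)
        · rw [inner_sub_left, inner_add_left, real_inner_smul_left,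
            real_inner_smul_left, hFT,
            real_inner_comm (deriv γ s) (N₁ s), real_inner_comm (deriv γ s) (N₂ s), hTN₁, hTN₂]
          ring
        · rw [inner_sub_left, inner_add_left, real_inner_smul_left,
            real_inner_smul_left, hfc, hN₁N₁,
            real_inner_comm (N₁ s) (N₂ s), hN₁N₂]
          ring
        · rw [inner_sub_left, inner_add_left, real_inner_smul_left,
            real_inner_smul_left, hgc, hN₂N₂, hN₁N₂]
          ring
      exact sub_eq_zero.mp hv
    refine ⟨-f0, -g0, fun s => ?_, ?_⟩
    · have h1 := hFsec s
      rw [hFdecomp s, inner_add_left, real_inner_smul_left, real_inner_smul_left,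
        real_inner_comm (deriv (deriv γ) s) (N₁ s), real_inner_comm (deriv (deriv γ) s) (N₂ s), hsecN₁, hsecN₂] at h1
      linarith
    · have h1 : ⟪F 0, F 0⟫_ℝ = r ^ 2 := by
        rw [real_inner_self_eq_norm_sq, hF]; simp [hsph 0]
      rw [hFdecomp 0] at h1
      rw [inner_add_left, inner_add_right, inner_add_right,
        real_inner_smul_left, real_inner_smul_left, real_inner_smul_left,
        real_inner_smul_left, real_inner_smul_right, real_inner_smul_right,
        real_inner_smul_right, real_inner_smul_right,
        hN₁N₁, hN₂N₂, hN₁N₂, real_inner_comm (N₁ 0) (N₂ 0), hN₁N₂] at h1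
      nlinarith [h1]
  constructor
  · constructor
    · rintro ⟨p, r, hr, hsph⟩
      obtain ⟨a, b, hab, -⟩ := key p r hr hsph
      exact ⟨a, b, hab⟩
    · rintro ⟨a, b, hab⟩
      -- center
      set c : ℝ → EuclideanSpace ℝ (Fin 3) := fun s => γ s + a • N₁ s + b • N₂ s with hc
      have hcd : ∀ s, HasDerivAt c 0 s := by
        intro s
        have h1 : HasDerivAt c
            (deriv γ s + a • deriv N₁ s + b • deriv N₂ s) s :=
          (((hγd s).hasDerivAt.add ((hN₁d s).hasDerivAt.const_smul a)).add
            ((hN₂d s).hasDerivAt.const_smul b))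
        have h2 : deriv γ s + a • deriv N₁ s + b • deriv N₂ s = 0 := by
          rw [hFrenet₁, hFrenet₂, smul_smul, smul_smul]
          have h3 : (1 : ℝ) + a * -κ₁ s + b * -κ₂ s = 0 := by
            have := hab s; linarith
          calc deriv γ s + (a * -κ₁ s) • deriv γ s + (b * -κ₂ s) • deriv γ s
              = ((1 : ℝ) + a * -κ₁ s + b * -κ₂ s) • deriv γ s := by
                rw [add_smul, add_smul, one_smul]
            _ = 0 := by rw [h3, zero_smul]
        rwa [h2] at h1
      have hcc : ∀ s, c s = c 0 :=
        fun s => is_const_of_deriv_eq_zero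
          (fun t => (hcd t).differentiableAt)
          (fun t => (hcd t).deriv) s 0
      have habpos : 0 < a ^ 2 + b ^ 2 := by
        rcases eq_or_ne a 0 with ha | ha
        · rcases eq_or_ne b 0 with hb | hb
          · exfalso; have := hab 0; rw [ha, hb] at this; norm_num at this
          · positivity
        · positivity
      refine ⟨c 0, Real.sqrt (a ^ 2 + b ^ 2), Real.sqrt_pos.mpr habpos, fun s => ?_⟩
      have h4 : γ s - c 0 = -(a • N₁ s + b • N₂ s) := by
        rw [← hcc s, hc]; simp only; abel
      have h5 : ‖γ s - c 0‖ ^ 2 = a ^ 2 + b ^ 2 := by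
        rw [h4, norm_neg, ← real_inner_self_eq_norm_sq]
        rw [inner_add_left, inner_add_right, inner_add_right,
          real_inner_smul_left, real_inner_smul_left, real_inner_smul_left,
          real_inner_smul_left, real_inner_smul_right, real_inner_smul_right,
          real_inner_smul_right, real_inner_smul_right,
          hN₁N₁, hN₂N₂, hN₁N₂, real_inner_comm (N₁ s) (N₂ s), hN₁N₂]
        ring
      rw [← Real.sqrt_sq (norm_nonneg _), h5]
  · exact key
end

section
/- Let γ: ℝ → ℝ³ be a smooth unit-speed curve with a rotation minimizing frame N₁, N₂ and natural curvatures κ₁, κ₂ (so (γ', N₁, N₂) is orthonormal, N₁' = −κ₁ γ', N₂' = −κ₂ γ'). If there exist constants (a, b) ≠ (0, 0) with a·κ₁(s) + b·κ₂(s) = 0 for all s (the normal development lies on a line through the origin), then the vector field v(s) = a • N₁(s) + b • N₂(s) is constant, the function s ↦ ⟪γ(s), v(s)⟫ is constant, and hence γ is contained in a plane. -/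
open scoped InnerProductSpace

/-- If the normal development of a unit-speed curve `γ` in Euclidean 3-space with a
rotation minimizing frame `(γ', N₁, N₂)` lies on a line through the origin
(`a·κ₁ + b·κ₂ = 0` with `(a, b) ≠ (0, 0)`), then `v = a • N₁ + b • N₂` is a constant
vector field, `s ↦ ⟪γ(s), v(s)⟫` is constant, and hence `γ` is contained in a plane. -/
theorem plane_curve_of_normal_development_through_origin
    (γ N₁ N₂ : ℝ → EuclideanSpace ℝ (Fin 3)) (κ₁ κ₂ : ℝ → ℝ)
    (hγ : ContDiff ℝ (⊤ : ℕ∞) γ) (hN₁ : ContDiff ℝ (⊤ : ℕ∞) N₁) (hN₂ : ContDiff ℝ (⊤ : ℕ∞) N₂)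
    (hunit : ∀ s, ‖deriv γ s‖ = 1)
    (hN₁unit : ∀ s, ‖N₁ s‖ = 1) (hN₂unit : ∀ s, ‖N₂ s‖ = 1)
    (hTN₁ : ∀ s, ⟪deriv γ s, N₁ s⟫_ℝ = 0)
    (hTN₂ : ∀ s, ⟪deriv γ s, N₂ s⟫_ℝ = 0)
    (hN₁N₂ : ∀ s, ⟪N₁ s, N₂ s⟫_ℝ = 0)
    (hFrenet₁ : ∀ s, deriv N₁ s = -κ₁ s • deriv γ s)
    (hFrenet₂ : ∀ s, deriv N₂ s = -κ₂ s • deriv γ s)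
    (a b : ℝ) (hab : (a, b) ≠ (0, 0))
    (hline : ∀ s, a * κ₁ s + b * κ₂ s = 0) :
    (∀ s t : ℝ, a • N₁ s + b • N₂ s = a • N₁ t + b • N₂ t) ∧
    (∀ s t : ℝ, ⟪γ s, a • N₁ s + b • N₂ s⟫_ℝ = ⟪γ t, a • N₁ t + b • N₂ t⟫_ℝ) ∧
    (∃ v : EuclideanSpace ℝ (Fin 3), ∃ d : ℝ, v ≠ 0 ∧ ∀ s, ⟪γ s, v⟫_ℝ = d) := by
  have hdN₁ : Differentiable ℝ N₁ := hN₁.differentiable (by simp)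
  have hdN₂ : Differentiable ℝ N₂ := hN₂.differentiable (by simp)
  have hdγ : Differentiable ℝ γ := hγ.differentiable (by simp)
  set f : ℝ → EuclideanSpace ℝ (Fin 3) := fun s => a • N₁ s + b • N₂ s with hf
  have hdf : Differentiable ℝ f := (hdN₁.const_smul a).add (hdN₂.const_smul b)
  have hderivf : ∀ s, deriv f s = 0 := by
    intro s
    have h1 : deriv f s = a • deriv N₁ s + b • deriv N₂ s := by
      rw [hf]
      rw [deriv_fun_add (f := fun y => a • N₁ y) (g := fun y => b • N₂ y) ((hdN₁ s).const_smul a) ((hdN₂ s).const_smul b),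
        deriv_fun_const_smul a (hdN₁ s), deriv_fun_const_smul b (hdN₂ s)]
    rw [h1, hFrenet₁, hFrenet₂, smul_smul, smul_smul, ← add_smul]
    have : a * -κ₁ s + b * -κ₂ s = 0 := by have := hline s; ring_nf; linarith
    rw [this, zero_smul]
  have hconst : ∀ s t : ℝ, f s = f t := fun s t =>
    is_const_of_deriv_eq_zero hdf hderivf s t
  refine ⟨hconst, ?_, ?_⟩
  · -- inner product constant
    intro s t
    have key : ∀ u, deriv (fun x => ⟪γ x, f x⟫_ℝ) u = 0 := by
      intro u
      rw [deriv_inner_apply (𝕜 := ℝ) (hdγ u) (hdf u), hderivf, inner_zero_right, zero_add]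
      have hfu : f u = a • N₁ u + b • N₂ u := rfl
      rw [hfu, inner_add_right, inner_smul_right, inner_smul_right, hTN₁, hTN₂]
      ring
    have : ∀ s t : ℝ, (fun x => ⟪γ x, f x⟫_ℝ) s = (fun x => ⟪γ x, f x⟫_ℝ) t := fun s t =>
      is_const_of_deriv_eq_zero (fun u => ((hdγ u).inner ℝ (hdf u))) key s t
    exact this s t
  · refine ⟨f 0, ⟪γ 0, f 0⟫_ℝ, ?_, ?_⟩
    · intro h
      have hnorm : ⟪f 0, f 0⟫_ℝ = a ^ 2 + b ^ 2 := by
        have h1 := hN₁unit 0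
        have h2 := hN₂unit 0
        have h3 := hN₁N₂ 0
        have e1 : ⟪N₁ 0, N₁ 0⟫_ℝ = 1 := by
          rw [real_inner_self_eq_norm_sq, h1]; norm_num
        have e2 : ⟪N₂ 0, N₂ 0⟫_ℝ = 1 := by
          rw [real_inner_self_eq_norm_sq, h2]; norm_num
        have e4 : ⟪N₂ 0, N₁ 0⟫_ℝ = 0 := by rw [real_inner_comm]; exact h3
        simp only [hf, inner_add_left, inner_add_right, inner_smul_left, inner_smul_right,
          RCLike.conj_to_real, e1, e2, e4, h3]
        ring
      rw [h, inner_zero_left] at hnorm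
      have ha : a = 0 := by nlinarith [sq_nonneg a, sq_nonneg b]
      have hb : b = 0 := by nlinarith [sq_nonneg a, sq_nonneg b]
      exact hab (by rw [ha, hb])
    · intro s
      have h1 : f s = f 0 := hconst s 0
      have key : ∀ u, deriv (fun x => ⟪γ x, f 0⟫_ℝ) u = 0 := by
        intro u
        rw [deriv_inner_apply (𝕜 := ℝ) (hdγ u) (differentiable_const _ u), deriv_const,
          inner_zero_right, zero_add]
        rw [hconst 0 u]
        show ⟪deriv γ u, a • N₁ u + b • N₂ u⟫_ℝ = 0
        rw [inner_add_right, inner_smul_right, inner_smul_right, hTN₁, hTN₂]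
        ring
      exact is_const_of_deriv_eq_zero
        (fun u => ((hdγ u).inner ℝ (differentiable_const _ u))) key s 0
end

section
/- Let γ: ℝ → ℂⁿ be a twice differentiable curve with γ'(t) ≠ 0 for all t, and κ₁: ℝ → ℝ a function with γ''(t) = κ₁(t) • (I • γ'(t)) for all t (i.e. J(γ') is rotation minimizing along γ). Let N: ℝ → ℂⁿ be a differentiable vector field along γ such that for all t: Re⟪N(t), γ'(t)⟫ = 0, Re⟪N(t), I • γ'(t)⟫ = 0, and N'(t) is a real scalar multiple of γ'(t) (N is a rotation minimizing vector field completing the frame). Then N'(t) = 0 for all t, i.e. the corresponding natural curvature vanishes identically. -/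
open scoped InnerProductSpace

/-!
Differentiating `Re⟪N, γ'⟫ = 0` gives `Re⟪N', γ'⟫ = -Re⟪N, γ''⟫`. Since `J(γ')` is rotation
minimizing, `γ'' = κ₁ J(γ')` is orthogonal to `N`, so `Re⟪N', γ'⟫ = 0`; but `N' = a γ'`, so
`a ‖γ'‖² = 0`, and `γ' ≠ 0` forces `a = 0`.
-/

section

variable {E : Type*} [NormedAddCommGroup E] [InnerProductSpace ℂ E] [NormedSpace ℝ E]

theorem re_inner_deriv_left_eq_neg_of_re_inner_eq_zero {f g : ℝ → E} {t : ℝ}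
    (hf : DifferentiableAt ℝ f t) (hg : DifferentiableAt ℝ g t)
    (h : ∀ s, (⟪f s, g s⟫_ℂ).re = 0) :
    (⟪deriv f t, g t⟫_ℂ).re = -(⟪f t, deriv g t⟫_ℂ).re := by
  have hd := Complex.reCLM.hasFDerivAt.comp_hasDerivAt t
    (hf.hasDerivAt.inner ℂ hg.hasDerivAt)
  have hzero : (Complex.reCLM ∘ fun s => ⟪f s, g s⟫_ℂ) = fun _ => (0 : ℝ) := funext h
  rw [hzero] at hd
  have hsum := hd.unique (hasDerivAt_const t 0)
  simp only [Complex.reCLM_apply, Complex.add_re] at hsum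
  linarith

variable [IsScalarTower ℝ ℂ E]

theorem re_inner_real_smul_right (a : ℝ) (v w : E) :
    (⟪v, a • w⟫_ℂ).re = a * (⟪v, w⟫_ℂ).re := by
  rw [← algebraMap_smul ℂ a w, Complex.coe_algebraMap, inner_smul_right, Complex.re_ofReal_mul]

theorem re_inner_real_smul_self (a : ℝ) (w : E) :
    (⟪a • w, w⟫_ℂ).re = a * ‖w‖ ^ 2 := by
  rw [← algebraMap_smul ℂ a w, Complex.coe_algebraMap, inner_smul_left,
    inner_self_eq_norm_sq_to_K]
  simp [← Complex.ofReal_pow]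

theorem eq_zero_of_eq_real_smul_of_re_inner_eq_zero {v w : E} {a : ℝ} (hv : v = a • w)
    (hw : w ≠ 0) (h : (⟪v, w⟫_ℂ).re = 0) : v = 0 := by
  rw [hv, re_inner_real_smul_self] at h
  have ha : a = 0 := by simpa [hw] using h
  rw [hv, ha, zero_smul]

end

theorem natural_curvatures_vanish_of_J_rm_general
    (n : ℕ) (γ : ℝ → EuclideanSpace ℂ (Fin n)) (κ₁ : ℝ → ℝ)
    (hγ' : Differentiable ℝ (deriv γ))
    (hne : ∀ t, deriv γ t ≠ 0)
    (hrm : ∀ t, deriv (deriv γ) t = κ₁ t • (Complex.I • deriv γ t))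
    (N : ℝ → EuclideanSpace ℂ (Fin n))
    (hN : Differentiable ℝ N)
    (hNT : ∀ t, (⟪N t, deriv γ t⟫_ℂ).re = 0)
    (hNJ : ∀ t, (⟪N t, Complex.I • deriv γ t⟫_ℂ).re = 0)
    (hNrm : ∀ t, ∃ a : ℝ, deriv N t = a • deriv γ t) :
    ∀ t, deriv N t = 0 := by
  intro t
  obtain ⟨a, ha⟩ := hNrm t
  have hNγ'' : (⟪N t, deriv (deriv γ) t⟫_ℂ).re = 0 := by
    rw [hrm t, re_inner_real_smul_right, hNJ t, mul_zero]
  have hN'γ' : (⟪deriv N t, deriv γ t⟫_ℂ).re = 0 := by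
    rw [re_inner_deriv_left_eq_neg_of_re_inner_eq_zero (hN t) (hγ' t) hNT, hNγ'', neg_zero]
  exact eq_zero_of_eq_real_smul_of_re_inner_eq_zero ha (hne t) hN'γ'

/-- If `J(γ')` is a rotation minimizing vector field along a curve `γ` in ℂⁿ (with
`γ' ≠ 0`), then any rotation minimizing vector field `N` completing the frame (normal
to both `γ'` and `J(γ') = I • γ'`, with `N'` proportional to `γ'`) is parallel:
`N' = 0`, i.e. its natural curvature vanishes identically. -/
theorem natural_curvatures_vanish_of_J_rm
    (n : ℕ) (γ : ℝ → EuclideanSpace ℂ (Fin n)) (κ₁ : ℝ → ℝ)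
    (hγ : Differentiable ℝ γ) (hγ' : Differentiable ℝ (deriv γ))
    (hne : ∀ t, deriv γ t ≠ 0)
    (hrm : ∀ t, deriv (deriv γ) t = κ₁ t • (Complex.I • deriv γ t))
    (N : ℝ → EuclideanSpace ℂ (Fin n))
    (hN : Differentiable ℝ N)
    (hNT : ∀ t, (⟪N t, deriv γ t⟫_ℂ).re = 0)
    (hNJ : ∀ t, (⟪N t, Complex.I • deriv γ t⟫_ℂ).re = 0)
    (hNrm : ∀ t, ∃ a : ℝ, deriv N t = a • deriv γ t) :
    ∀ t, deriv N t = 0 :=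
  natural_curvatures_vanish_of_J_rm_general n γ κ₁ hγ' hne hrm N hN hNT hNJ hNrm
end

section
/- Let κ₁ be a nonzero real constant and γ: ℝ → ℂⁿ a twice differentiable curve with γ''(t) = κ₁ • (I • γ'(t)) for all t. Then the point c = γ(0) + (κ₁⁻¹ • (I • γ'(0))) satisfies γ(t) + κ₁⁻¹ • (I • γ'(t)) = c for all t, and consequently ‖γ(t) − c‖ = ‖γ'(0)‖ / |κ₁| for all t; i.e. γ lies on a sphere of center c and radius ‖γ'(0)‖/|κ₁|. -/
/-!
The center map `t ↦ γ t + κ₁⁻¹ • I • γ' t` has derivative `γ' + κ₁⁻¹ • I • (κ₁ • I • γ') = 0`,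
so it is constant. The velocity solves the linear equation `γ'' = (κ₁ I) • γ'`, hence
`γ' t = exp (i κ₁ t) • γ' 0` has constant norm, and `γ t - c = -κ₁⁻¹ • I • γ' t` has norm
`‖γ' 0‖ / |κ₁|`.
-/

open Complex

section

variable {E : Type*} [NormedAddCommGroup E] [NormedSpace ℂ E]

theorem hasDerivAt_cexp_ofReal_mul (a : ℂ) (t : ℝ) :
    HasDerivAt (fun u : ℝ => cexp (u * a)) (cexp (t * a) * a) t := by
  simpa using ((hasDerivAt_id (t : ℂ)).mul_const a).cexp.comp_ofReal

theorem eq_cexp_smul_of_hasDerivAt_smul {f : ℝ → E} {a : ℂ}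
    (hf : ∀ t, HasDerivAt f (a • f t) t) (t : ℝ) : f t = cexp (t * a) • f 0 := by
  have hg : ∀ s : ℝ, HasDerivAt (fun u : ℝ => cexp (u * -a) • f u) 0 s := by
    intro s
    have := (hasDerivAt_cexp_ofReal_mul (-a) s).smul (hf s)
    rwa [smul_smul, ← add_smul, ← mul_add, add_neg_cancel, mul_zero, zero_smul] at this
  have := is_const_of_deriv_eq_zero (fun u => (hg u).differentiableAt) (fun u => (hg u).deriv) t 0
  rw [ofReal_zero, zero_mul, Complex.exp_zero, one_smul] at this
  rw [← this, smul_smul, ← Complex.exp_add, mul_neg, add_neg_cancel, Complex.exp_zero, one_smul]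

theorem norm_eq_norm_zero_of_hasDerivAt_smul_I_smul {f : ℝ → E} {κ : ℝ}
    (hf : ∀ t, HasDerivAt f (κ • I • f t) t) (t : ℝ) : ‖f t‖ = ‖f 0‖ := by
  have hf' : ∀ t, HasDerivAt f ((κ * I) • f t) t := fun t => by
    rw [mul_smul, coe_smul]; exact hf t
  rw [eq_cexp_smul_of_hasDerivAt_smul hf' t, norm_smul, ← mul_assoc, ← ofReal_mul,
    norm_exp_ofReal_mul_I, one_mul]

theorem hasDerivAt_add_inv_smul_I_smul_eq_zero {γ γ' : ℝ → E} {κ : ℝ} (hκ : κ ≠ 0) {t : ℝ}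
    (hγ : HasDerivAt γ (γ' t) t) (hγ' : HasDerivAt γ' (κ • I • γ' t) t) :
    HasDerivAt (fun u => γ u + κ⁻¹ • I • γ' u) 0 t := by
  have := hγ.add ((hγ'.const_smul I).const_smul κ⁻¹)
  rwa [smul_comm I κ, smul_smul κ⁻¹, inv_mul_cancel₀ hκ, one_smul, smul_smul, I_mul_I,
    neg_one_smul, add_neg_cancel] at this

end

/-- A magnetic curve `γ` in ℂⁿ with nonzero constant natural curvature `κ₁`
(`γ'' = κ₁ • (I • γ')`) satisfies `γ(t) + κ₁⁻¹ • (I • γ'(t)) = γ(0) + κ₁⁻¹ • (I • γ'(0))`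
for all `t`, and hence lies on the sphere of center `c = γ(0) + κ₁⁻¹ • (I • γ'(0))`
and radius `‖γ'(0)‖/|κ₁|`. -/
theorem magnetic_curve_lies_on_sphere
    (n : ℕ) (κ₁ : ℝ) (hκ₁ : κ₁ ≠ 0) (γ : ℝ → EuclideanSpace ℂ (Fin n))
    (hγ : Differentiable ℝ γ) (hγ' : Differentiable ℝ (deriv γ))
    (hrm : ∀ t, deriv (deriv γ) t = κ₁ • (Complex.I • deriv γ t)) :
    ∀ t : ℝ,
      γ t + κ₁⁻¹ • (Complex.I • deriv γ t) =
        γ 0 + κ₁⁻¹ • (Complex.I • deriv γ 0) ∧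
      ‖γ t - (γ 0 + κ₁⁻¹ • (Complex.I • deriv γ 0))‖ = ‖deriv γ 0‖ / |κ₁| := by
  have hvel : ∀ s, HasDerivAt (deriv γ) (κ₁ • I • deriv γ s) s := fun s =>
    hrm s ▸ (hγ' s).hasDerivAt
  have hcenter := fun s => hasDerivAt_add_inv_smul_I_smul_eq_zero hκ₁ (hγ s).hasDerivAt (hvel s)
  intro t
  have hct : γ t + κ₁⁻¹ • I • deriv γ t = γ 0 + κ₁⁻¹ • I • deriv γ 0 :=
    is_const_of_deriv_eq_zero (fun s => (hcenter s).differentiableAt)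
      (fun s => (hcenter s).deriv) t 0
  refine ⟨hct, ?_⟩
  rw [← hct, sub_add_cancel_left, norm_neg, norm_smul, norm_smul, norm_I, one_mul,
    norm_eq_norm_zero_of_hasDerivAt_smul_I_smul hvel t, Real.norm_eq_abs, abs_inv,
    div_eq_inv_mul]
end
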